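/- arXiv:1401.0315 — 2 statements merged into one kernel-verified Lean document; each statement's English description precedes it below -/
import Mathlib

section
/- Let B be a V-category with V-kernel-pairs. Then StrMono_V B = (Epi_V B)^{↓V}, i.e. every morphism V-orthogonal on the right to all V-epimorphisms is automatically a V-monomorphism. If moreover B has V-cokernel-pairs, then Epi_V B = (StrMono_V B)^{↑V}; in particular (Epi_V B, StrMono_V B) is a V-prefactorization system on B. -/
/-!
The projections `p₁, p₂` of the `V`-kernel pair of `m` have a common section, the diagonal `Δ`,
so `p₁` is a `V`-epimorphism. If `m` is `V`-orthogonal to every `V`-epimorphism, the filler `d`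
of the square `p₂ ≫ m = p₁ ≫ m` satisfies `d = Δ ≫ p₁ ≫ d = Δ ≫ p₂ = 𝟙`, hence `p₁ = p₂`, and a
`V`-kernel pair with equal projections says precisely that `m` is a `V`-monomorphism.
Dually, split monomorphisms are `V`-strong monomorphisms, and the codiagonal of a `V`-cokernel
pair shows that a morphism `V`-orthogonal to all of them is a `V`-epimorphism.
-/

open CategoryTheory CategoryTheory.Limits CategoryTheory.MonoidalCategory

universe w v₁ v₂ v₃ v₄ u₁ u₂ u₃ u₄

namespace EnrichedFS

variable (V : Type u₁) [Category.{v₁} V] [MonoidalCategory V] [SymmetricCategory V]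
  [MonoidalClosed V]
variable (B : Type u₂) [Category.{v₂} B] [EnrichedOrdinaryCategory V B]

/-- `e` is `V`-orthogonal to `m`: the square of hom-objects
with top `B(A₂,m)`, left `B(e,X₁)`, right `B(e,X₂)`, bottom `B(A₁,m)`
is a pullback in `V`. -/
def VOrth {A₁ A₂ X₁ X₂ : B} (e : A₁ ⟶ A₂) (m : X₁ ⟶ X₂) : Prop :=
  IsPullback (eHomWhiskerLeft V A₂ m) (eHomWhiskerRight V e X₁)
    (eHomWhiskerRight V e X₂) (eHomWhiskerLeft V A₁ m)

/-- `H^{↓V}`: the class of morphisms to which every member of `H` is `V`-orthogonal. -/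
def vRlp (H : MorphismProperty B) : MorphismProperty B :=
  fun _ _ m => ∀ ⦃A₁ A₂ : B⦄ (e : A₁ ⟶ A₂), H e → VOrth V B e m

/-- `M^{↑V}`: the class of morphisms which are `V`-orthogonal to every member of `M`. -/
def vLlp (M : MorphismProperty B) : MorphismProperty B :=
  fun _ _ e => ∀ ⦃X₁ X₂ : B⦄ (m : X₁ ⟶ X₂), M m → VOrth V B e m

/-- ordinary orthogonality: unique diagonal fillers for every commutative square. -/
def OrdOrth {A₁ A₂ X₁ X₂ : B} (e : A₁ ⟶ A₂) (m : X₁ ⟶ X₂) : Prop :=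
  ∀ (u : A₁ ⟶ X₁) (v : A₂ ⟶ X₂), u ≫ m = e ≫ v →
    ∃! d : A₂ ⟶ X₁, e ≫ d = u ∧ d ≫ m = v

/-- `H^{↓}` (ordinary). -/
def ordRlp (H : MorphismProperty B) : MorphismProperty B :=
  fun _ _ m => ∀ ⦃A₁ A₂ : B⦄ (e : A₁ ⟶ A₂), H e → OrdOrth B e m

/-- `M^{↑}` (ordinary). -/
def ordLlp (M : MorphismProperty B) : MorphismProperty B :=
  fun _ _ e => ∀ ⦃X₁ X₂ : B⦄ (m : X₁ ⟶ X₂), M m → OrdOrth B e m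

/-- `(E,M)` is a `V`-prefactorization system: `E^{↓V} = M` and `M^{↑V} = E`. -/
def IsVPrefactorization (E M : MorphismProperty B) : Prop :=
  vRlp V B E = M ∧ vLlp V B M = E

/-- `(E,M)` is an ordinary prefactorization system. -/
def IsOrdPrefactorization (E M : MorphismProperty B) : Prop :=
  ordRlp B E = M ∧ ordLlp B M = E

/-- every morphism factors as a morphism in `E` followed by a morphism in `M`. -/
def FactorizationsExist (E M : MorphismProperty B) : Prop :=
  ∀ ⦃X Y : B⦄ (f : X ⟶ Y), ∃ (Z : B) (e : X ⟶ Z) (m : Z ⟶ Y), E e ∧ M m ∧ e ≫ m = f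

/-- `(E,M)` is a `V`-factorization system. -/
def IsVFactorizationSystem (E M : MorphismProperty B) : Prop :=
  IsVPrefactorization V B E M ∧ FactorizationsExist B E M

/-- `(E,M)` is an ordinary factorization system. -/
def IsOrdFactorizationSystem (E M : MorphismProperty B) : Prop :=
  IsOrdPrefactorization B E M ∧ FactorizationsExist B E M

/-- intersection of two classes of morphisms. -/
def interProp (M N : MorphismProperty B) : MorphismProperty B := fun _ _ f => M f ∧ N f

/-- `V`-monomorphisms. -/
def vMono : MorphismProperty B := fun _ _ m => ∀ A : B, Mono (eHomWhiskerLeft V A m)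

/-- `V`-epimorphisms. -/
def vEpi : MorphismProperty B := fun _ _ e => ∀ A : B, Mono (eHomWhiskerRight V e A)

/-- `V`-strong monomorphisms. -/
def vStrongMono : MorphismProperty B := fun _ _ m =>
  vMono V B m ∧ ∀ ⦃A₁ A₂ : B⦄ (e : A₁ ⟶ A₂), vEpi V B e → VOrth V B e m

/-- `V`-strong epimorphisms. -/
def vStrongEpi : MorphismProperty B := fun _ _ e =>
  vEpi V B e ∧ ∀ ⦃X₁ X₂ : B⦄ (m : X₁ ⟶ X₂), vMono V B m → VOrth V B e m

/-- ordinary monomorphisms, as a class. -/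
def ordMono : MorphismProperty B := fun _ _ m => Mono m

/-- ordinary epimorphisms, as a class. -/
def ordEpi : MorphismProperty B := fun _ _ e => Epi e

/-- ordinary strong monomorphisms. -/
def ordStrongMono : MorphismProperty B := fun _ _ m =>
  Mono m ∧ ∀ ⦃A₁ A₂ : B⦄ (e : A₁ ⟶ A₂), Epi e → OrdOrth B e m

/-- ordinary strong epimorphisms. -/
def ordStrongEpi : MorphismProperty B := fun _ _ e =>
  Epi e ∧ ∀ ⦃X₁ X₂ : B⦄ (m : X₁ ⟶ X₂), Mono m → OrdOrth B e m

/-- closure under composition with isomorphisms on either side. -/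
def ClosedUnderIsoComp (E : MorphismProperty B) : Prop :=
  (∀ ⦃X Y Z : B⦄ (e : X ⟶ Y) (i : Y ⟶ Z), E e → IsIso i → E (e ≫ i)) ∧
  (∀ ⦃X Y Z : B⦄ (i : X ⟶ Y) (e : Y ⟶ Z), IsIso i → E e → E (i ≫ e))

/-- a commutative square which is a `V`-pullback: it is sent to a pullback square
in `V` by every hom functor `B(A,-)`. -/
def IsVPullbackSq {P X Y Z : B} (p₁ : P ⟶ X) (p₂ : P ⟶ Y) (f : X ⟶ Z) (g : Y ⟶ Z) : Prop :=
  p₁ ≫ f = p₂ ≫ g ∧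
    ∀ A : B, IsPullback (eHomWhiskerLeft V A p₁) (eHomWhiskerLeft V A p₂)
      (eHomWhiskerLeft V A f) (eHomWhiskerLeft V A g)

/-- a commutative square which is a `V`-pushout: it is sent to a pullback square
in `V` by every hom functor `B(-,A)`. -/
def IsVPushoutSq {X Y₁ Y₂ Q : B} (f₁ : X ⟶ Y₁) (f₂ : X ⟶ Y₂) (i₁ : Y₁ ⟶ Q) (i₂ : Y₂ ⟶ Q) :
    Prop :=
  f₁ ≫ i₁ = f₂ ≫ i₂ ∧
    ∀ A : B, IsPullback (eHomWhiskerRight V i₁ A) (eHomWhiskerRight V i₂ A)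
      (eHomWhiskerRight V f₁ A) (eHomWhiskerRight V f₂ A)

/-- `B` has `V`-kernel pairs. -/
def HasVKernelPairs : Prop :=
  ∀ ⦃X Y : B⦄ (f : X ⟶ Y), ∃ (P : B) (p₁ p₂ : P ⟶ X), IsVPullbackSq V B p₁ p₂ f f

/-- `B` has `V`-cokernel pairs. -/
def HasVCokernelPairs : Prop :=
  ∀ ⦃X Y : B⦄ (f : X ⟶ Y), ∃ (Q : B) (i₁ i₂ : Y ⟶ Q), IsVPushoutSq V B f f i₁ i₂

/-- `m : P ⟶ C` is a `V`-fibre-product (`V`-wide-pullback) of the family `f i : X i ⟶ C`,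
with projections `π i`. -/
def IsVFibreProduct {ι : Type w} {C : B} {X : ι → B} (f : ∀ i, X i ⟶ C)
    {P : B} (m : P ⟶ C) (π : ∀ i, P ⟶ X i) : Prop :=
  (∀ i, π i ≫ f i = m) ∧
    ∀ (A : B) (Z : V) (z : Z ⟶ (A ⟶[V] C)) (zi : ∀ i, Z ⟶ (A ⟶[V] X i)),
      (∀ i, zi i ≫ eHomWhiskerLeft V A (f i) = z) →
        ∃! t : Z ⟶ (A ⟶[V] P), t ≫ eHomWhiskerLeft V A m = z ∧
          ∀ i, t ≫ eHomWhiskerLeft V A (π i) = zi i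

/-- `m : P ⟶ C` is an ordinary fibre product (wide pullback) of the family `f i : X i ⟶ C`. -/
def OrdIsFibreProduct {ι : Type w} {C : B} {X : ι → B} (f : ∀ i, X i ⟶ C)
    {P : B} (m : P ⟶ C) (π : ∀ i, P ⟶ X i) : Prop :=
  (∀ i, π i ≫ f i = m) ∧
    ∀ ⦃W' : B⦄ (z : W' ⟶ C) (zi : ∀ i, W' ⟶ X i), (∀ i, zi i ≫ f i = z) →
      ∃! t : W' ⟶ P, t ≫ m = z ∧ ∀ i, t ≫ π i = zi i

/-- a cone is a `V`-limit cone: it is sent to a limit cone in `V` by every `B(A,-)`. -/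
def IsVLimitCone {J : Type u₃} [Category.{v₃} J] {D : J ⥤ B} (c : Cone D) : Prop :=
  ∀ (A : B) (Z : V) (z : ∀ j : J, Z ⟶ (A ⟶[V] D.obj j)),
    (∀ ⦃j j' : J⦄ (φ : j ⟶ j'), z j ≫ eHomWhiskerLeft V A (D.map φ) = z j') →
      ∃! t : Z ⟶ (A ⟶[V] c.pt), ∀ j, t ≫ eHomWhiskerLeft V A (c.π.app j) = z j

/-- a cocone is a `V`-colimit cocone: it is sent to a limit cone in `V` by every `B(-,A)`. -/
def IsVColimitCocone {J : Type u₃} [Category.{v₃} J] {D : J ⥤ B} (c : Cocone D) : Prop :=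
  ∀ (A : B) (Z : V) (z : ∀ j : J, Z ⟶ (D.obj j ⟶[V] A)),
    (∀ ⦃j j' : J⦄ (φ : j ⟶ j'), z j' ≫ eHomWhiskerRight V (D.map φ) A = z j) →
      ∃! t : Z ⟶ (c.pt ⟶[V] A), ∀ j, t ≫ eHomWhiskerRight V (c.ι.app j) A = z j

/-- `B` has small `V`-limits. -/
def HasSmallVLimits : Prop :=
  ∀ (J : Type v₂) [SmallCategory J] (D : J ⥤ B), ∃ c : Cone D, IsVLimitCone V B c

/-- `B` has small `V`-colimits. -/
def HasSmallVColimits : Prop :=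
  ∀ (J : Type v₂) [SmallCategory J] (D : J ⥤ B), ∃ c : Cocone D, IsVColimitCocone V B c

/-- `B` has finite `V`-limits. -/
def HasFiniteVLimits : Prop :=
  ∀ (J : Type) [SmallCategory J] [FinCategory J] (D : J ⥤ B),
    ∃ c : Cone D, IsVLimitCone V B c

/-- `B` is well-powered with respect to the class `M`: every object has,
up to isomorphism, only a set of `M`-subobjects. -/
def WellPoweredWrt (M : MorphismProperty B) : Prop :=
  ∀ X : B, ∃ (ι : Type v₂) (Y : ι → B) (f : ∀ i, Y i ⟶ X), (∀ i, M (f i)) ∧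
    ∀ ⦃Z : B⦄ (g : Z ⟶ X), M g → ∃ (i : ι) (h : Z ≅ Y i), h.hom ≫ f i = g

/-- `B` is co-well-powered with respect to the class `E`. -/
def CoWellPoweredWrt (E : MorphismProperty B) : Prop :=
  ∀ X : B, ∃ (ι : Type v₂) (Y : ι → B) (f : ∀ i, X ⟶ Y i), (∀ i, E (f i)) ∧
    ∀ ⦃Z : B⦄ (g : X ⟶ Z), E g → ∃ (i : ι) (h : Y i ≅ Z), f i ≫ h.hom = g

/-- comparison morphism `B(T, X) ⟶ [v, B(A, X)]` in `V` induced by a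
unit `η : v ⟶ B(A, T)`, where `T` is a candidate tensor `v ⊗ A`. -/
def tensorComparison {v : V} {A T : B} (η : v ⟶ (A ⟶[V] T)) (X : B) :
    (T ⟶[V] X) ⟶ (ihom v).obj (A ⟶[V] X) :=
  MonoidalClosed.curry (eComp V A T X) ≫ (MonoidalClosed.pre η).app (A ⟶[V] X)

/-- `η : v ⟶ B(A,T)` exhibits `T` as a tensor `v ⊗ A` in the enriched sense. -/
def IsTensorUnit (v : V) (A T : B) (η : v ⟶ (A ⟶[V] T)) : Prop :=
  ∀ X : B, IsIso (tensorComparison V B η X)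

/-- `B` is tensored over `V`. -/
def Tensored : Prop :=
  ∀ (v : V) (A : B), ∃ (T : B) (η : v ⟶ (A ⟶[V] T)), IsTensorUnit V B v A T η

/-- `E` is closed under tensors: whenever tensors exist, `v ⊗ e` lies in `E` for `e ∈ E`. -/
def ClosedUnderTensors (E : MorphismProperty B) : Prop :=
  ∀ (v : V) ⦃A₁ A₂ : B⦄ (e : A₁ ⟶ A₂) {T₁ T₂ : B}
    (η₁ : v ⟶ (A₁ ⟶[V] T₁)) (η₂ : v ⟶ (A₂ ⟶[V] T₂)),
    IsTensorUnit V B v A₁ T₁ η₁ → IsTensorUnit V B v A₂ T₂ η₂ → E e →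
      ∀ t : T₁ ⟶ T₂, η₁ ≫ eHomWhiskerLeft V A₁ t = η₂ ≫ eHomWhiskerRight V e T₂ → E t

/-- comparison morphism `B(A, C) ⟶ [v, B(A, X)]` in `V` induced by a
counit `ε : v ⟶ B(C, X)`, where `C` is a candidate cotensor `[v, X]`. -/
def cotensorComparison {v : V} {C X : B} (ε : v ⟶ (C ⟶[V] X)) (A : B) :
    (A ⟶[V] C) ⟶ (ihom v).obj (A ⟶[V] X) :=
  MonoidalClosed.curry ((β_ (C ⟶[V] X) (A ⟶[V] C)).hom ≫ eComp V A C X) ≫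
    (MonoidalClosed.pre ε).app (A ⟶[V] X)

/-- `ε : v ⟶ B(C,X)` exhibits `C` as a cotensor `[v, X]` in the enriched sense. -/
def IsCotensorCounit (v : V) (X C : B) (ε : v ⟶ (C ⟶[V] X)) : Prop :=
  ∀ A : B, IsIso (cotensorComparison V B ε A)

/-- `B` is cotensored over `V`. -/
def Cotensored : Prop :=
  ∀ (v : V) (X : B), ∃ (C : B) (ε : v ⟶ (C ⟶[V] X)), IsCotensorCounit V B v X C ε

/-- `M` is closed under cotensors: `[v, m]` lies in `M` for `m ∈ M`. -/
def ClosedUnderCotensors (M : MorphismProperty B) : Prop :=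
  ∀ (v : V) ⦃X₁ X₂ : B⦄ (m : X₁ ⟶ X₂) {C₁ C₂ : B}
    (ε₁ : v ⟶ (C₁ ⟶[V] X₁)) (ε₂ : v ⟶ (C₂ ⟶[V] X₂)),
    IsCotensorCounit V B v X₁ C₁ ε₁ → IsCotensorCounit V B v X₂ C₂ ε₂ → M m →
      ∀ t : C₁ ⟶ C₂, ε₁ ≫ eHomWhiskerLeft V C₁ m = ε₂ ≫ eHomWhiskerRight V t X₂ → M t

/-- a `V`-functor from a `V`-category `J` to an enriched ordinary category `D`. -/
structure VFunctor (J : Type u₃) [EnrichedCategory V J]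
    (D : Type u₄) [Category.{v₄} D] [EnrichedOrdinaryCategory V D] where
  obj : J → D
  emap : ∀ X Y : J, (X ⟶[V] Y) ⟶ (obj X ⟶[V] obj Y)
  emap_id : ∀ X : J, eId V X ≫ emap X X = eId V (obj X)
  emap_comp : ∀ X Y Z : J,
    eComp V X Y Z ≫ emap X Z = (emap X Y ⊗ₘ emap Y Z) ≫ eComp V (obj X) (obj Y) (obj Z)

/-- the underlying action of a `V`-functor on ordinary morphisms. -/
def VFunctor.map' {J : Type u₃} [Category.{v₃} J] [EnrichedOrdinaryCategory V J]
    {D : Type u₄} [Category.{v₄} D] [EnrichedOrdinaryCategory V D]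
    (F : VFunctor V J D) {X Y : J} (f : X ⟶ Y) : F.obj X ⟶ F.obj Y :=
  (eHomEquiv V).symm (eHomEquiv V f ≫ F.emap X Y)

/-- a `V`-adjunction `F ⊣ G`, given by a `V`-natural isomorphism
`D(F A, X) ≅ A(A, G X)` of hom-objects. -/
structure VAdjunction {A : Type u₃} [Category.{v₃} A] [EnrichedOrdinaryCategory V A]
    {D : Type u₄} [Category.{v₄} D] [EnrichedOrdinaryCategory V D]
    (F : VFunctor V A D) (G : VFunctor V D A) where
  iso : ∀ (X : A) (Y : D), (F.obj X ⟶[V] Y) ≅ (X ⟶[V] G.obj Y)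
  nat_right : ∀ (X : A) (Y Y' : D),
    eComp V (F.obj X) Y Y' ≫ (iso X Y').hom =
      ((iso X Y).hom ⊗ₘ G.emap Y Y') ≫ eComp V X (G.obj Y) (G.obj Y')
  nat_left : ∀ (X X' : A) (Y : D),
    (F.emap X X' ▷ (F.obj X' ⟶[V] Y)) ≫ eComp V (F.obj X) (F.obj X') Y ≫ (iso X Y).hom =
      ((X ⟶[V] X') ◁ (iso X' Y).hom) ≫ eComp V X X' (G.obj Y)

/-- a `V`-functor `J → V` (a weight), presented by its uncurried action. -/
structure VWeight (J : Type u₃) [EnrichedCategory V J] where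
  obj : J → V
  act : ∀ j j' : J, obj j ⊗ (j ⟶[V] j') ⟶ obj j'
  act_id : ∀ j : J, (obj j ◁ eId V j) ≫ act j j = (ρ_ (obj j)).hom
  act_comp : ∀ j j' j'' : J,
    (α_ (obj j) (j ⟶[V] j') (j' ⟶[V] j'')).inv ≫ (act j j' ▷ (j' ⟶[V] j'')) ≫ act j' j'' =
      (obj j ◁ eComp V j j' j'') ≫ act j j''

/-- a `V`-natural transformation between `V`-functors. -/
structure VNatTrans {J : Type u₃} [EnrichedCategory V J]
    {D : Type u₄} [Category.{v₄} D] [EnrichedOrdinaryCategory V D]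
    (F G : VFunctor V J D) where
  app : ∀ j : J, F.obj j ⟶ G.obj j
  naturality : ∀ j j' : J,
    F.emap j j' ≫ eHomWhiskerLeft V (F.obj j) (app j') =
      G.emap j j' ≫ eHomWhiskerRight V (app j) (G.obj j')

/-- `cone` exhibits `L` as the `V`-enriched weighted (indexed) limit `[W, F]`. -/
structure IsWeightedLimit {J : Type u₃} [EnrichedCategory V J]
    {D : Type u₄} [Category.{v₄} D] [EnrichedOrdinaryCategory V D]
    (W : VWeight V J) (F : VFunctor V J D) (L : D)
    (cone : ∀ j : J, W.obj j ⟶ (L ⟶[V] F.obj j)) : Prop where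
  natural : ∀ j j' : J,
    W.act j j' ≫ cone j' =
      (cone j ▷ (j ⟶[V] j')) ≫ ((L ⟶[V] F.obj j) ◁ F.emap j j') ≫
        eComp V L (F.obj j) (F.obj j')
  universal : ∀ (A : D) (Z : V) (μ : ∀ j : J, Z ⊗ W.obj j ⟶ (A ⟶[V] F.obj j)),
    (∀ j j' : J,
      (Z ◁ W.act j j') ≫ μ j' =
        (α_ Z (W.obj j) (j ⟶[V] j')).inv ≫ (μ j ▷ (j ⟶[V] j')) ≫
          ((A ⟶[V] F.obj j) ◁ F.emap j j') ≫ eComp V A (F.obj j) (F.obj j')) →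
      ∃! t : Z ⟶ (A ⟶[V] L), ∀ j : J,
        (t ▷ W.obj j) ≫ ((A ⟶[V] L) ◁ cone j) ≫ eComp V A L (F.obj j) = μ j

/-- `B` is `V`-finitely-well-complete: it has finite `V`-limits and `V`-intersections
of arbitrary class-indexed families of `V`-strong monomorphisms. -/
def VFinitelyWellComplete : Prop :=
  HasFiniteVLimits V B ∧
    ∀ {ι : Type (max u₂ v₂)} {C : B} (X : ι → B) (f : ∀ i, X i ⟶ C),
      (∀ i, vStrongMono V B (f i)) →
        ∃ (P : B) (m : P ⟶ C) (π : ∀ i, P ⟶ X i), IsVFibreProduct V B f m π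

/-- `B` is finitely well-complete (ordinary sense): it has finite limits and
intersections of arbitrary class-indexed families of strong monomorphisms. -/
def OrdFinitelyWellComplete : Prop :=
  HasFiniteLimits B ∧
    ∀ {ι : Type (max u₂ v₂)} {C : B} (X : ι → B) (f : ∀ i, X i ⟶ C),
      (∀ i, ordStrongMono B (f i)) →
        ∃ (P : B) (m : P ⟶ C) (π : ∀ i, P ⟶ X i), OrdIsFibreProduct B f m π

lemma isPullback_of_retractions {C : Type*} [Category C] {P X Y Z : C} {fst : P ⟶ X}
    {snd : P ⟶ Y} {f : X ⟶ Z} {g : Y ⟶ Z} [Mono f] (comm : fst ≫ f = snd ≫ g)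
    (r₁ : X ⟶ P) (r₂ : Z ⟶ Y) (h₁ : fst ≫ r₁ = 𝟙 P) (h₂ : g ≫ r₂ = 𝟙 Y)
    (hr : r₁ ≫ snd = f ≫ r₂) : IsPullback fst snd f g := by
  have : Mono fst := mono_of_mono_fac h₁
  refine IsPullback.of_isLimit (PullbackCone.IsLimit.mk comm (fun s => s.fst ≫ r₁)
    (fun s => ?_) (fun s => ?_) (fun s t ht _ => ?_))
  · have hsnd : s.fst ≫ r₁ ≫ snd = s.snd := by
      rw [hr, s.condition_assoc, h₂, Category.comp_id]
    rw [← cancel_mono f, Category.assoc, comm, ← Category.assoc, Category.assoc s.fst,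
      hsnd, s.condition]
  · rw [Category.assoc, hr, s.condition_assoc, h₂, Category.comp_id]
  · rw [← ht, Category.assoc, h₁, Category.comp_id]

section

variable {V B}

omit [SymmetricCategory V] [MonoidalClosed V]

lemma eHomEquiv_comp_eq_eHomWhiskerLeft {X Y Z : B} (f : X ⟶ Y) (g : Y ⟶ Z) :
    eHomEquiv V (f ≫ g) = eHomEquiv V f ≫ eHomWhiskerLeft V X g := by
  simp only [eHomWhiskerLeft, eHomEquiv_comp, MonoidalCategory.tensorHom_def]
  rw [unitors_inv_equal]
  simp

lemma eHomEquiv_comp_eq_eHomWhiskerRight {X Y Z : B} (f : X ⟶ Y) (g : Y ⟶ Z) :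
    eHomEquiv V (f ≫ g) = eHomEquiv V g ≫ eHomWhiskerRight V f Z := by
  simp only [eHomWhiskerRight, eHomEquiv_comp, tensorHom_def']
  rw [leftUnitor_inv_naturality_assoc]
  simp

lemma IsVPullbackSq.exists_lift {P X Y Z : B} {p₁ : P ⟶ X} {p₂ : P ⟶ Y} {f : X ⟶ Z}
    {g : Y ⟶ Z} (h : IsVPullbackSq V B p₁ p₂ f g) {W : B} (a : W ⟶ X) (b : W ⟶ Y)
    (hab : a ≫ f = b ≫ g) : ∃ l : W ⟶ P, l ≫ p₁ = a ∧ l ≫ p₂ = b := by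
  obtain ⟨t, ht₁, ht₂⟩ := (h.2 W).exists_lift (eHomEquiv V a) (eHomEquiv V b) (by
    rw [← eHomEquiv_comp_eq_eHomWhiskerLeft, ← eHomEquiv_comp_eq_eHomWhiskerLeft, hab])
  refine ⟨(eHomEquiv V).symm t, (eHomEquiv V).injective ?_, (eHomEquiv V).injective ?_⟩
  · rwa [eHomEquiv_comp_eq_eHomWhiskerLeft, Equiv.apply_symm_apply]
  · rwa [eHomEquiv_comp_eq_eHomWhiskerLeft, Equiv.apply_symm_apply]

lemma IsVPushoutSq.exists_desc {X Y₁ Y₂ Q : B} {f₁ : X ⟶ Y₁} {f₂ : X ⟶ Y₂} {i₁ : Y₁ ⟶ Q}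
    {i₂ : Y₂ ⟶ Q} (h : IsVPushoutSq V B f₁ f₂ i₁ i₂) {W : B} (a : Y₁ ⟶ W) (b : Y₂ ⟶ W)
    (hab : f₁ ≫ a = f₂ ≫ b) : ∃ l : Q ⟶ W, i₁ ≫ l = a ∧ i₂ ≫ l = b := by
  obtain ⟨t, ht₁, ht₂⟩ := (h.2 W).exists_lift (eHomEquiv V a) (eHomEquiv V b) (by
    rw [← eHomEquiv_comp_eq_eHomWhiskerRight, ← eHomEquiv_comp_eq_eHomWhiskerRight, hab])
  refine ⟨(eHomEquiv V).symm t, (eHomEquiv V).injective ?_, (eHomEquiv V).injective ?_⟩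
  · rwa [eHomEquiv_comp_eq_eHomWhiskerRight, Equiv.apply_symm_apply]
  · rwa [eHomEquiv_comp_eq_eHomWhiskerRight, Equiv.apply_symm_apply]

lemma VOrth.ordOrth {A₁ A₂ X₁ X₂ : B} {e : A₁ ⟶ A₂} {m : X₁ ⟶ X₂} (h : VOrth V B e m) :
    OrdOrth B e m := by
  intro u v huv
  obtain ⟨t, ht₁, ht₂⟩ := h.exists_lift (eHomEquiv V v) (eHomEquiv V u) (by
    rw [← eHomEquiv_comp_eq_eHomWhiskerRight, ← eHomEquiv_comp_eq_eHomWhiskerLeft, huv])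
  refine ⟨(eHomEquiv V).symm t, ⟨(eHomEquiv V).injective ?_, (eHomEquiv V).injective ?_⟩,
    fun d hd => (eHomEquiv V).eq_symm_apply.mpr (h.hom_ext ?_ ?_)⟩
  · rwa [eHomEquiv_comp_eq_eHomWhiskerRight, Equiv.apply_symm_apply]
  · rwa [eHomEquiv_comp_eq_eHomWhiskerLeft, Equiv.apply_symm_apply]
  · rw [ht₁, ← eHomEquiv_comp_eq_eHomWhiskerLeft, hd.2]
  · rw [ht₂, ← eHomEquiv_comp_eq_eHomWhiskerRight, hd.1]

lemma vMono_of_isVPullbackSq_self {P X Y : B} {p : P ⟶ X} {m : X ⟶ Y}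
    (h : IsVPullbackSq V B p p m m) : vMono V B m := fun A =>
  ⟨fun f g hfg => ((h.2 A).lift_fst f g hfg).symm.trans ((h.2 A).lift_snd f g hfg)⟩

lemma vEpi_of_isVPushoutSq_self {X Y Q : B} {e : X ⟶ Y} {i : Y ⟶ Q}
    (h : IsVPushoutSq V B e e i i) : vEpi V B e := fun A =>
  ⟨fun f g hfg => ((h.2 A).lift_fst f g hfg).symm.trans ((h.2 A).lift_snd f g hfg)⟩

lemma vEpi_of_isSplitEpi {X Y : B} (p : X ⟶ Y) [IsSplitEpi p] : vEpi V B p := fun A =>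
  mono_of_mono_fac (f := eHomWhiskerRight V (section_ p) A) (by
    rw [← eHomWhiskerRight_comp, IsSplitEpi.id, eHomWhiskerRight_id])

lemma vMono_of_isSplitMono {X Y : B} (i : X ⟶ Y) [IsSplitMono i] : vMono V B i := fun A =>
  mono_of_mono_fac (f := eHomWhiskerLeft V A (retraction i)) (by
    rw [← eHomWhiskerLeft_comp, IsSplitMono.id, eHomWhiskerLeft_id])

lemma vStrongMono_of_isSplitMono {X Y : B} (i : X ⟶ Y) [IsSplitMono i] :
    vStrongMono V B i := by
  refine ⟨vMono_of_isSplitMono i, fun A₁ A₂ e he => ?_⟩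
  have : Mono (eHomWhiskerRight V e Y) := he Y
  refine isPullback_of_retractions (eHom_whisker_exchange V e i)
    (eHomWhiskerLeft V A₂ (retraction i)) (eHomWhiskerLeft V A₁ (retraction i)) ?_ ?_
    (eHom_whisker_exchange V e (retraction i))
  all_goals rw [← eHomWhiskerLeft_comp, IsSplitMono.id, eHomWhiskerLeft_id]

lemma vMono_of_vRlp_vEpi {X Y : B} {m : X ⟶ Y}
    (hker : ∃ (P : B) (p₁ p₂ : P ⟶ X), IsVPullbackSq V B p₁ p₂ m m)
    (hm : vRlp V B (vEpi V B) m) : vMono V B m := by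
  obtain ⟨P, p₁, p₂, h⟩ := hker
  obtain ⟨Δ, hΔ₁, hΔ₂⟩ := h.exists_lift (𝟙 X) (𝟙 X) rfl
  have : IsSplitEpi p₁ := IsSplitEpi.mk' ⟨Δ, hΔ₁⟩
  obtain ⟨d, ⟨hd, -⟩, -⟩ := (hm p₁ (vEpi_of_isSplitEpi p₁)).ordOrth p₂ m h.1.symm
  have hd_id : d = 𝟙 X := calc
    d = (Δ ≫ p₁) ≫ d := by rw [hΔ₁, Category.id_comp]
    _ = 𝟙 X := by rw [Category.assoc, hd, hΔ₂]
  rw [hd_id, Category.comp_id] at hd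
  exact vMono_of_isVPullbackSq_self (hd ▸ h)

lemma vEpi_of_vLlp_vStrongMono {X Y : B} {e : X ⟶ Y}
    (hcoker : ∃ (Q : B) (i₁ i₂ : Y ⟶ Q), IsVPushoutSq V B e e i₁ i₂)
    (he : vLlp V B (vStrongMono V B) e) : vEpi V B e := by
  obtain ⟨Q, i₁, i₂, h⟩ := hcoker
  obtain ⟨r, hr₁, hr₂⟩ := h.exists_desc (𝟙 Y) (𝟙 Y) rfl
  have : IsSplitMono i₁ := IsSplitMono.mk' ⟨r, hr₁⟩
  obtain ⟨d, ⟨-, hd⟩, -⟩ := (he i₁ (vStrongMono_of_isSplitMono i₁)).ordOrth e i₂ h.1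
  have hd_id : d = 𝟙 Y := calc
    d = d ≫ i₁ ≫ r := by rw [hr₁, Category.comp_id]
    _ = 𝟙 Y := by rw [← Category.assoc, hd, hr₂]
  rw [hd_id, Category.id_comp] at hd
  exact vEpi_of_isVPushoutSq_self (hd ▸ h)

end

/-- If `B` has `V`-kernel pairs then `StrMono_V B = (Epi_V B)^{↓V}`; if moreover `B`
has `V`-cokernel pairs then `Epi_V B = (StrMono_V B)^{↑V}`, so that
`(Epi_V B, StrMono_V B)` is a `V`-prefactorization system. -/
theorem stmt8 (hkp : HasVKernelPairs V B) :
    vStrongMono V B = vRlp V B (vEpi V B) ∧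
      (HasVCokernelPairs V B →
        vEpi V B = vLlp V B (vStrongMono V B) ∧
          IsVPrefactorization V B (vEpi V B) (vStrongMono V B)) := by
  have hMono : vStrongMono V B = vRlp V B (vEpi V B) :=
    MorphismProperty.ext _ _ fun _ _ m =>
      ⟨fun hm => hm.2, fun hm => ⟨vMono_of_vRlp_vEpi (hkp m) hm, hm⟩⟩
  refine ⟨hMono, fun hckp => ?_⟩
  have hEpi : vEpi V B = vLlp V B (vStrongMono V B) :=
    MorphismProperty.ext _ _ fun _ _ e =>
      ⟨fun he _ _ m hm => hm.2 e he, vEpi_of_vLlp_vStrongMono (hckp e)⟩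
  exact ⟨hEpi, hMono.symm, hEpi.symm⟩

end EnrichedFS
end

section
/- Every right V-adjoint V-functor preserves V-strong-monomorphisms: if F ⊣ G : B → A is a V-adjunction and m is a V-strong-monomorphism in B, then Gm is a V-strong-monomorphism in A. Dually, every left V-adjoint V-functor preserves V-strong-epimorphisms. -/
/-!
The adjunction isomorphism `B(FA, X) ≅ A(A, GX)` is `V`-natural in both variables, so it
identifies `B(FA, m)` with `A(A, Gm)` and `B(Fe, X)` with `A(e, GX)`. Hence `G` preserves
`V`-monomorphisms, `F` preserves `V`-epimorphisms, and the orthogonality squares of `Fe ↓_V m`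
and `e ↓_V Gm` are isomorphic, so one is a pullback iff the other is. A `V`-epimorphism `e` in `A`
thus gives `Fe ↓_V m` for a `V`-strong monomorphism `m`, i.e. `e ↓_V Gm`; dually for
`V`-strong epimorphisms.
-/

open CategoryTheory CategoryTheory.Limits CategoryTheory.MonoidalCategory

universe w v₁ v₂ v₃ v₄ u₁ u₂ u₃ u₄

namespace EnrichedFS

variable (V : Type u₁) [Category.{v₁} V] [MonoidalCategory V] [SymmetricCategory V]
  [MonoidalClosed V]
variable (B : Type u₂) [Category.{v₂} B] [EnrichedOrdinaryCategory V B]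

namespace VAdjunction

variable {V B} {A : Type u₃} [Category.{v₃} A] [EnrichedOrdinaryCategory V A]
  {F : VFunctor V A B} {G : VFunctor V B A} (adj : VAdjunction V F G)
omit [SymmetricCategory V] [MonoidalClosed V]
include adj

lemma eHomWhiskerLeft_comp_iso_hom (X : A) {Y Y' : B} (f : Y ⟶ Y') :
    eHomWhiskerLeft V (F.obj X) f ≫ (adj.iso X Y').hom =
      (adj.iso X Y).hom ≫ eHomWhiskerLeft V X (VFunctor.map' V G f) := by
  dsimp [eHomWhiskerLeft, VFunctor.map']
  rw [Equiv.apply_symm_apply, MonoidalCategory.whiskerLeft_comp,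
    rightUnitor_inv_naturality_assoc]
  simp only [Category.assoc]
  rw [← whisker_exchange_assoc, ← tensorHom_def_assoc, ← adj.nat_right]

lemma eHomWhiskerRight_comp_iso_hom {X X' : A} (e : X ⟶ X') (Y : B) :
    eHomWhiskerRight V (VFunctor.map' V F e) Y ≫ (adj.iso X Y).hom =
      (adj.iso X' Y).hom ≫ eHomWhiskerRight V e (G.obj Y) := by
  dsimp [eHomWhiskerRight, VFunctor.map']
  rw [Equiv.apply_symm_apply, comp_whiskerRight]
  simp only [Category.assoc]
  rw [adj.nat_left, ← whisker_exchange_assoc, ← leftUnitor_inv_naturality_assoc]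

lemma vMono_map' {X Y : B} {m : X ⟶ Y} (hm : vMono V B m) :
    vMono V A (VFunctor.map' V G m) := fun A' =>
  ((MorphismProperty.monomorphisms V).arrow_mk_iso_iff
    (Arrow.isoMk (adj.iso A' X) (adj.iso A' Y)
      (adj.eHomWhiskerLeft_comp_iso_hom A' m).symm)).1 (hm (F.obj A'))

lemma vEpi_map' {X Y : A} {e : X ⟶ Y} (he : vEpi V A e) :
    vEpi V B (VFunctor.map' V F e) := fun Z =>
  ((MorphismProperty.monomorphisms V).arrow_mk_iso_iff
    (Arrow.isoMk (adj.iso Y Z) (adj.iso X Z)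
      (adj.eHomWhiskerRight_comp_iso_hom e Z).symm)).2 (he (G.obj Z))

lemma vOrth_map'_iff {A₁ A₂ : A} {X₁ X₂ : B} (e : A₁ ⟶ A₂) (m : X₁ ⟶ X₂) :
    VOrth V B (VFunctor.map' V F e) m ↔ VOrth V A e (VFunctor.map' V G m) := by
  have natL := adj.eHomWhiskerRight_comp_iso_hom e
  have natR := adj.eHomWhiskerLeft_comp_iso_hom (Y := X₁) (Y' := X₂)
  constructor
  · intro h
    exact h.of_iso (adj.iso A₂ X₁) (adj.iso A₂ X₂) (adj.iso A₁ X₁) (adj.iso A₁ X₂)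
      (natR A₂ m) (natL X₁) (natL X₂) (natR A₁ m)
  · intro h
    exact h.of_iso' (adj.iso A₂ X₁) (adj.iso A₂ X₂) (adj.iso A₁ X₁) (adj.iso A₁ X₂)
      (natR A₂ m).symm (natL X₁).symm (natL X₂).symm (natR A₁ m).symm

lemma vStrongMono_map' {X Y : B} {m : X ⟶ Y} (hm : vStrongMono V B m) :
    vStrongMono V A (VFunctor.map' V G m) :=
  ⟨adj.vMono_map' hm.1, fun _ _ e he =>
    (adj.vOrth_map'_iff e m).1 (hm.2 _ (adj.vEpi_map' he))⟩

lemma vStrongEpi_map' {X Y : A} {e : X ⟶ Y} (he : vStrongEpi V A e) :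
    vStrongEpi V B (VFunctor.map' V F e) :=
  ⟨adj.vEpi_map' he.1, fun _ _ m hm =>
    (adj.vOrth_map'_iff e m).2 (he.2 _ (adj.vMono_map' hm))⟩

end VAdjunction

/-- Every right `V`-adjoint `V`-functor preserves `V`-strong monomorphisms; dually,
every left `V`-adjoint `V`-functor preserves `V`-strong epimorphisms. -/
theorem stmt11 {A : Type u₃} [Category.{v₃} A] [EnrichedOrdinaryCategory V A]
    (F : VFunctor V A B) (G : VFunctor V B A) (adj : VAdjunction V F G) :
    (∀ ⦃X Y : B⦄ (m : X ⟶ Y), vStrongMono V B m →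
      vStrongMono V A (VFunctor.map' V G m)) ∧
    (∀ ⦃X Y : A⦄ (e : X ⟶ Y), vStrongEpi V A e →
      vStrongEpi V B (VFunctor.map' V F e)) :=
  ⟨fun _ _ _ hm => adj.vStrongMono_map' hm, fun _ _ _ he => adj.vStrongEpi_map' he⟩

end EnrichedFS
end
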